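/- Let φ and φ̃ be two continuous boundary data on ∂D whose traces φ₁, φ₂ and φ̃₁, φ̃₂ are Lipschitz on [0,t̄], with corresponding parameters ζ and ζ̃, and assume ζ* := max(ζ, ζ̃) < 1. Let λ and λ̃ be the corresponding solutions of Q_φ(s,λ(s)) = 0 and Q_{φ̃}(s,λ̃(s)) = 0. Then for all s ∈ [0,t̄]: (1 − ζ*)·|λ̃(s) − λ(s)| ≤ 4‖γ‖∞·(‖φ̃₁ − φ₁‖∞ + ‖φ̃₂ − φ₂‖∞). In particular, if φ^j is a sequence of such data with ζ^j ≤ ζ* < 1 and ‖φ₁^j − φ₁‖∞, ‖φ₂^j − φ₂‖∞ → 0, then λ^j → λ uniformly on [0,t̄]. -/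

import Mathlib

/-!
Subtracting the equations `Q_φ(s, λ(s)) = 0` and `Q_φ̃(s, λ̃(s)) = 0` writes `λ̃(s) - λ(s)` as `-2`
times a sum of three products. The first contains the difference of the data and is at most
`2‖γ‖∞ (‖φ̃₁ - φ₁‖∞ + ‖φ̃₂ - φ₂‖∞)`; the other two contain increments of `γ₂` and `φ₂` between
`λ(s)` and `λ̃(s)`, so together they contribute at most `ζ |λ̃(s) - λ(s)|`, which is absorbed into
the left side because `ζ < 1`. The estimate is uniform in `s`, so uniform convergence of the data
gives uniform convergence of the reparametrizations.
-/

open Set Filter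

noncomputable section

/-- `Q_ψ(s,λ) = λ - s + 2(γ₂(λ) - γ₁(s))(ψ₂(λ) + ψ₁(s))` from the paper. -/
def Qphi (γ₁ γ₂ ψ₁ ψ₂ : ℝ → ℝ) (s l : ℝ) : ℝ :=
  l - s + 2 * (γ₂ l - γ₁ s) * (ψ₂ l + ψ₁ s)

theorem Qphi_sub_Qphi (γ₁ γ₂ φ₁ φ₂ ψ₁ ψ₂ : ℝ → ℝ) (s l l' : ℝ) :
    Qphi γ₁ γ₂ ψ₁ ψ₂ s l' - Qphi γ₁ γ₂ φ₁ φ₂ s l =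
      l' - l + 2 * ((γ₂ l' - γ₁ s) * ((ψ₁ s - φ₁ s) + (ψ₂ l' - φ₂ l'))
        + (γ₂ l' - γ₂ l) * (φ₂ l' + φ₁ s) + (γ₂ l - γ₁ s) * (φ₂ l' - φ₂ l)) := by
  unfold Qphi
  ring

theorem abs_sub_le_two_mul {a b M : ℝ} (ha : |a| ≤ M) (hb : |b| ≤ M) : |a - b| ≤ 2 * M :=
  (abs_sub a b).trans (by linarith)

theorem abs_add_le_two_mul {a b M : ℝ} (ha : |a| ≤ M) (hb : |b| ≤ M) : |a + b| ≤ 2 * M :=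
  (abs_add_le a b).trans (by linarith)

theorem LipschitzOnWith.abs_sub_le {S : Set ℝ} {f : ℝ → ℝ} {K : NNReal}
    (hf : LipschitzOnWith K f S) {x y : ℝ} (hx : x ∈ S) (hy : y ∈ S) :
    |f x - f y| ≤ K * |x - y| := by
  simpa only [Real.dist_eq] using hf.dist_le_mul x hx y hy

theorem one_sub_mul_abs_sub_le_of_Qphi_eq_zero {S : Set ℝ} {γ₁ γ₂ φ₁ φ₂ ψ₁ ψ₂ : ℝ → ℝ}
    {Mγ Lγ Mφ Lφ : NNReal} {ζ d₁ d₂ s l l' : ℝ}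
    (hγ₂ : LipschitzOnWith Lγ γ₂ S) (hγ₁bd : ∀ x ∈ S, |γ₁ x| ≤ Mγ)
    (hγ₂bd : ∀ x ∈ S, |γ₂ x| ≤ Mγ)
    (hφ₂ : LipschitzOnWith Lφ φ₂ S) (hφ₁bd : ∀ x ∈ S, |φ₁ x| ≤ Mφ)
    (hφ₂bd : ∀ x ∈ S, |φ₂ x| ≤ Mφ)
    (hζ : 4 * ((Mγ : ℝ) + Lγ) * ((Mφ : ℝ) + Lφ) ≤ ζ)
    (hd₁ : ∀ x ∈ S, |ψ₁ x - φ₁ x| ≤ d₁) (hd₂ : ∀ x ∈ S, |ψ₂ x - φ₂ x| ≤ d₂)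
    (hs : s ∈ S) (hl : l ∈ S) (hl' : l' ∈ S)
    (hQ : Qphi γ₁ γ₂ φ₁ φ₂ s l = 0) (hQ' : Qphi γ₁ γ₂ ψ₁ ψ₂ s l' = 0) :
    (1 - ζ) * |l' - l| ≤ 4 * Mγ * (d₁ + d₂) := by
  have hsub := Qphi_sub_Qphi γ₁ γ₂ φ₁ φ₂ ψ₁ ψ₂ s l l'
  rw [hQ, hQ', sub_zero, eq_comm, add_eq_zero_iff_eq_neg, ← neg_mul] at hsub
  have hcoeff : 4 * (Lγ : ℝ) * Mφ + 4 * Mγ * Lφ ≤ ζ := by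
    nlinarith [Mγ.coe_nonneg, Lγ.coe_nonneg, Mφ.coe_nonneg, Lφ.coe_nonneg]
  have habs : |l' - l| ≤ 4 * Mγ * (d₁ + d₂) + ζ * |l' - l| :=
    calc |l' - l|
        ≤ 2 * (|γ₂ l' - γ₁ s| * |(ψ₁ s - φ₁ s) + (ψ₂ l' - φ₂ l')|
          + |γ₂ l' - γ₂ l| * |φ₂ l' + φ₁ s| + |γ₂ l - γ₁ s| * |φ₂ l' - φ₂ l|) := by
          rw [hsub, abs_mul, abs_neg, abs_two, ← abs_mul, ← abs_mul, ← abs_mul]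
          gcongr
          exact abs_add_three _ _ _
      _ ≤ 2 * (2 * Mγ * (d₁ + d₂) + Lγ * |l' - l| * (2 * Mφ)
          + 2 * Mγ * (Lφ * |l' - l|)) := by
          gcongr
          · exact abs_sub_le_two_mul (hγ₂bd l' hl') (hγ₁bd s hs)
          · exact (abs_add_le _ _).trans (add_le_add (hd₁ s hs) (hd₂ l' hl'))
          · exact hγ₂.abs_sub_le hl' hl
          · exact abs_add_le_two_mul (hφ₂bd l' hl') (hφ₁bd s hs)
          · exact abs_sub_le_two_mul (hγ₂bd l hl) (hγ₁bd s hs)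
          · exact hφ₂.abs_sub_le hl' hl
      _ = 4 * Mγ * (d₁ + d₂) + (4 * (Lγ : ℝ) * Mφ + 4 * Mγ * Lφ) * |l' - l| := by ring
      _ ≤ 4 * Mγ * (d₁ + d₂) + ζ * |l' - l| := by gcongr
  linarith

theorem tendstoUniformlyOn_of_abs_sub_le_mul {ι α β : Type*} {p : Filter ι}
    {F₁ F₂ : ι → α → ℝ} {f₁ f₂ : α → ℝ} {G : ι → β → ℝ} {g : β → ℝ} {S : Set α} {T : Set β}
    (C : ℝ) (hG : ∀ i δ, (∀ x ∈ S, |F₁ i x - f₁ x| ≤ δ) → (∀ x ∈ S, |F₂ i x - f₂ x| ≤ δ) →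
      ∀ y ∈ T, |G i y - g y| ≤ C * δ)
    (h₁ : TendstoUniformlyOn F₁ f₁ p S) (h₂ : TendstoUniformlyOn F₂ f₂ p S) :
    TendstoUniformlyOn G g p T := by
  rw [Metric.tendstoUniformlyOn_iff] at h₁ h₂ ⊢
  intro ε hε
  have hC : 0 < |C| + 1 := by positivity
  have hδ : 0 < ε / (|C| + 1) := div_pos hε hC
  filter_upwards [h₁ _ hδ, h₂ _ hδ] with i hi₁ hi₂ y hy
  have hCδ : C * (ε / (|C| + 1)) < ε := by
    rw [mul_div_assoc', div_lt_iff₀ hC]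
    nlinarith [le_abs_self C]
  rw [Real.dist_eq, abs_sub_comm]
  refine (hG i _ (fun x hx => ?_) (fun x hx => ?_) y hy).trans_lt hCδ
  · simpa only [Real.dist_eq, abs_sub_comm] using (hi₁ x hx).le
  · simpa only [Real.dist_eq, abs_sub_comm] using (hi₂ x hx).le

theorem stmt_3_general (tb : ℝ) (γ₁ γ₂ : ℝ → ℝ) (Mγ Lγ : NNReal)
    (hγ₂lip : LipschitzOnWith Lγ γ₂ (Set.Icc 0 tb))
    (hγ₁bd : ∀ s ∈ Set.Icc 0 tb, |γ₁ s| ≤ (Mγ : ℝ))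
    (hγ₂bd : ∀ s ∈ Set.Icc 0 tb, |γ₂ s| ≤ (Mγ : ℝ))
    -- the datum φ with its parameter ζ
    (φ₁ φ₂ : ℝ → ℝ) (Mφ Lφ : NNReal)
    (hφ₂lip : LipschitzOnWith Lφ φ₂ (Set.Icc 0 tb))
    (hφ₁bd : ∀ s ∈ Set.Icc 0 tb, |φ₁ s| ≤ (Mφ : ℝ))
    (hφ₂bd : ∀ s ∈ Set.Icc 0 tb, |φ₂ s| ≤ (Mφ : ℝ))
    -- the datum φ̃ with its parameter ζ̃
    (φt₁ φt₂ : ℝ → ℝ) (Mφt Lφt : NNReal)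
    -- ζ* = max(ζ, ζ̃) < 1
    (zstar : ℝ)
    (hzstar : zstar = max (4 * ((Mγ : ℝ) + (Lγ : ℝ)) * ((Mφ : ℝ) + (Lφ : ℝ)))
        (4 * ((Mγ : ℝ) + (Lγ : ℝ)) * ((Mφt : ℝ) + (Lφt : ℝ))))
    (hzstar1 : zstar < 1)
    -- the two reparametrizations
    (lam lamt : ℝ → ℝ)
    (hlam_bij : Set.BijOn lam (Set.Icc 0 tb) (Set.Icc 0 tb))
    (hlam_sol : ∀ s ∈ Set.Icc 0 tb, Qphi γ₁ γ₂ φ₁ φ₂ s (lam s) = 0)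
    (hlamt_bij : Set.BijOn lamt (Set.Icc 0 tb) (Set.Icc 0 tb))
    (hlamt_sol : ∀ s ∈ Set.Icc 0 tb, Qphi γ₁ γ₂ φt₁ φt₂ s (lamt s) = 0) :
    -- quantitative stability estimate
    (∀ d₁ d₂ : ℝ, (∀ s ∈ Set.Icc 0 tb, |φt₁ s - φ₁ s| ≤ d₁) →
      (∀ s ∈ Set.Icc 0 tb, |φt₂ s - φ₂ s| ≤ d₂) →
      ∀ s ∈ Set.Icc 0 tb,
        (1 - zstar) * |lamt s - lam s| ≤ 4 * (Mγ : ℝ) * (d₁ + d₂)) ∧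
    -- uniform convergence of the reparametrizations for approximating data
    (∀ (fj₁ fj₂ : ℕ → ℝ → ℝ) (Mj Lj : ℕ → NNReal) (lamj : ℕ → ℝ → ℝ),
      (∀ j, LipschitzOnWith (Lj j) (fj₁ j) (Set.Icc 0 tb)) →
      (∀ j, LipschitzOnWith (Lj j) (fj₂ j) (Set.Icc 0 tb)) →
      (∀ j, ∀ s ∈ Set.Icc 0 tb, |fj₁ j s| ≤ (Mj j : ℝ)) →
      (∀ j, ∀ s ∈ Set.Icc 0 tb, |fj₂ j s| ≤ (Mj j : ℝ)) →
      (∀ j, fj₁ j 0 = fj₂ j 0) → (∀ j, fj₁ j tb = fj₂ j tb) →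
      (∀ j, 4 * ((Mγ : ℝ) + (Lγ : ℝ)) * ((Mj j : ℝ) + (Lj j : ℝ)) ≤ zstar) →
      (∀ j, Set.BijOn (lamj j) (Set.Icc 0 tb) (Set.Icc 0 tb)) →
      (∀ j, StrictMonoOn (lamj j) (Set.Icc 0 tb)) →
      (∀ j, ∀ s ∈ Set.Icc 0 tb, Qphi γ₁ γ₂ (fj₁ j) (fj₂ j) s (lamj j s) = 0) →
      (∀ j, lamj j 0 = 0) → (∀ j, lamj j tb = tb) →
      TendstoUniformlyOn fj₁ φ₁ atTop (Set.Icc 0 tb) →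
      TendstoUniformlyOn fj₂ φ₂ atTop (Set.Icc 0 tb) →
      TendstoUniformlyOn lamj lam atTop (Set.Icc 0 tb)) := by
  have hζ : 4 * ((Mγ : ℝ) + Lγ) * ((Mφ : ℝ) + Lφ) ≤ zstar := hzstar ▸ le_max_left _ _
  have stability : ∀ (ψ₁ ψ₂ μ : ℝ → ℝ), BijOn μ (Icc 0 tb) (Icc 0 tb) →
      (∀ s ∈ Icc 0 tb, Qphi γ₁ γ₂ ψ₁ ψ₂ s (μ s) = 0) → ∀ d₁ d₂ : ℝ,
      (∀ s ∈ Icc 0 tb, |ψ₁ s - φ₁ s| ≤ d₁) → (∀ s ∈ Icc 0 tb, |ψ₂ s - φ₂ s| ≤ d₂) →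
      ∀ s ∈ Icc 0 tb, (1 - zstar) * |μ s - lam s| ≤ 4 * Mγ * (d₁ + d₂) :=
    fun _ _ _ hbij hsol _ _ hd₁ hd₂ s hs =>
      one_sub_mul_abs_sub_le_of_Qphi_eq_zero hγ₂lip hγ₁bd hγ₂bd hφ₂lip hφ₁bd hφ₂bd hζ hd₁ hd₂
        hs (hlam_bij.mapsTo hs) (hbij.mapsTo hs) (hlam_sol s hs) (hsol s hs)
  refine ⟨stability φt₁ φt₂ lamt hlamt_bij hlamt_sol,
    fun fj₁ fj₂ _ _ lamj _ _ _ _ _ _ _ hjbij _ hjsol _ _ hconv₁ hconv₂ => ?_⟩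
  have hgap : 0 < 1 - zstar := sub_pos.mpr hzstar1
  refine tendstoUniformlyOn_of_abs_sub_le_mul (8 * Mγ / (1 - zstar))
    (fun j δ hd₁ hd₂ s hs => ?_) hconv₁ hconv₂
  have := stability (fj₁ j) (fj₂ j) (lamj j) (hjbij j) (hjsol j) δ δ hd₁ hd₂ s hs
  rw [div_mul_eq_mul_div, le_div_iff₀ hgap]
  linarith

/-- stability of the reparametrization `λ` with respect to the boundary
datum, and uniform convergence `λ^j → λ` for approximating data. -/
theorem stmt_3 (tb : ℝ) (htb : 0 < tb)
    (γ₁ γ₂ : ℝ → ℝ) (Mγ Lγ : NNReal)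
    (hγ₁lip : LipschitzOnWith Lγ γ₁ (Set.Icc 0 tb))
    (hγ₂lip : LipschitzOnWith Lγ γ₂ (Set.Icc 0 tb))
    (hγ₁bd : ∀ s ∈ Set.Icc 0 tb, |γ₁ s| ≤ (Mγ : ℝ))
    (hγ₂bd : ∀ s ∈ Set.Icc 0 tb, |γ₂ s| ≤ (Mγ : ℝ))
    (hsign : ∀ t ∈ Set.Ioo 0 tb, γ₁ t < 0 ∧ 0 < γ₂ t)
    (hγ₁0 : γ₁ 0 = 0) (hγ₁t : γ₁ tb = 0) (hγ₂0 : γ₂ 0 = 0) (hγ₂t : γ₂ tb = 0)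
    -- the datum φ with its parameter ζ
    (φ₁ φ₂ : ℝ → ℝ) (Mφ Lφ : NNReal)
    (hφ₁lip : LipschitzOnWith Lφ φ₁ (Set.Icc 0 tb))
    (hφ₂lip : LipschitzOnWith Lφ φ₂ (Set.Icc 0 tb))
    (hφ₁bd : ∀ s ∈ Set.Icc 0 tb, |φ₁ s| ≤ (Mφ : ℝ))
    (hφ₂bd : ∀ s ∈ Set.Icc 0 tb, |φ₂ s| ≤ (Mφ : ℝ))
    (hφ0 : φ₁ 0 = φ₂ 0) (hφt : φ₁ tb = φ₂ tb)
    -- the datum φ̃ with its parameter ζ̃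
    (φt₁ φt₂ : ℝ → ℝ) (Mφt Lφt : NNReal)
    (hφt₁lip : LipschitzOnWith Lφt φt₁ (Set.Icc 0 tb))
    (hφt₂lip : LipschitzOnWith Lφt φt₂ (Set.Icc 0 tb))
    (hφt₁bd : ∀ s ∈ Set.Icc 0 tb, |φt₁ s| ≤ (Mφt : ℝ))
    (hφt₂bd : ∀ s ∈ Set.Icc 0 tb, |φt₂ s| ≤ (Mφt : ℝ))
    (hφt0 : φt₁ 0 = φt₂ 0) (hφtt : φt₁ tb = φt₂ tb)
    -- ζ* = max(ζ, ζ̃) < 1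
    (zstar : ℝ)
    (hzstar : zstar = max (4 * ((Mγ : ℝ) + (Lγ : ℝ)) * ((Mφ : ℝ) + (Lφ : ℝ)))
        (4 * ((Mγ : ℝ) + (Lγ : ℝ)) * ((Mφt : ℝ) + (Lφt : ℝ))))
    (hzstar1 : zstar < 1)
    -- the two reparametrizations
    (lam lamt : ℝ → ℝ)
    (hlam_bij : Set.BijOn lam (Set.Icc 0 tb) (Set.Icc 0 tb))
    (hlam_mono : StrictMonoOn lam (Set.Icc 0 tb))
    (hlam_sol : ∀ s ∈ Set.Icc 0 tb, Qphi γ₁ γ₂ φ₁ φ₂ s (lam s) = 0)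
    (hlam0 : lam 0 = 0) (hlamt : lam tb = tb)
    (hlamt_bij : Set.BijOn lamt (Set.Icc 0 tb) (Set.Icc 0 tb))
    (hlamt_mono : StrictMonoOn lamt (Set.Icc 0 tb))
    (hlamt_sol : ∀ s ∈ Set.Icc 0 tb, Qphi γ₁ γ₂ φt₁ φt₂ s (lamt s) = 0)
    (hlamt0 : lamt 0 = 0) (hlamtt : lamt tb = tb) :
    -- quantitative stability estimate
    (∀ d₁ d₂ : ℝ, (∀ s ∈ Set.Icc 0 tb, |φt₁ s - φ₁ s| ≤ d₁) →
      (∀ s ∈ Set.Icc 0 tb, |φt₂ s - φ₂ s| ≤ d₂) →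
      ∀ s ∈ Set.Icc 0 tb,
        (1 - zstar) * |lamt s - lam s| ≤ 4 * (Mγ : ℝ) * (d₁ + d₂)) ∧
    -- uniform convergence of the reparametrizations for approximating data
    (∀ (fj₁ fj₂ : ℕ → ℝ → ℝ) (Mj Lj : ℕ → NNReal) (lamj : ℕ → ℝ → ℝ),
      (∀ j, LipschitzOnWith (Lj j) (fj₁ j) (Set.Icc 0 tb)) →
      (∀ j, LipschitzOnWith (Lj j) (fj₂ j) (Set.Icc 0 tb)) →
      (∀ j, ∀ s ∈ Set.Icc 0 tb, |fj₁ j s| ≤ (Mj j : ℝ)) →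
      (∀ j, ∀ s ∈ Set.Icc 0 tb, |fj₂ j s| ≤ (Mj j : ℝ)) →
      (∀ j, fj₁ j 0 = fj₂ j 0) → (∀ j, fj₁ j tb = fj₂ j tb) →
      (∀ j, 4 * ((Mγ : ℝ) + (Lγ : ℝ)) * ((Mj j : ℝ) + (Lj j : ℝ)) ≤ zstar) →
      (∀ j, Set.BijOn (lamj j) (Set.Icc 0 tb) (Set.Icc 0 tb)) →
      (∀ j, StrictMonoOn (lamj j) (Set.Icc 0 tb)) →
      (∀ j, ∀ s ∈ Set.Icc 0 tb, Qphi γ₁ γ₂ (fj₁ j) (fj₂ j) s (lamj j s) = 0) →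
      (∀ j, lamj j 0 = 0) → (∀ j, lamj j tb = tb) →
      TendstoUniformlyOn fj₁ φ₁ atTop (Set.Icc 0 tb) →
      TendstoUniformlyOn fj₂ φ₂ atTop (Set.Icc 0 tb) →
      TendstoUniformlyOn lamj lam atTop (Set.Icc 0 tb)) :=
  stmt_3_general tb γ₁ γ₂ Mγ Lγ hγ₂lip hγ₁bd hγ₂bd φ₁ φ₂ Mφ Lφ hφ₂lip hφ₁bd hφ₂bd φt₁ φt₂ Mφt Lφt
    zstar hzstar hzstar1 lam lamt hlam_bij hlam_sol hlamt_bij hlamt_sol
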